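/- arXiv:1504.01596 — 4 statements merged into one kernel-verified Lean document; each statement's English description precedes it below -/
import Mathlib

section
/- For every M ∈ ℕ and every ratio ρ ∈ (0,1] there exists N ∈ ℕ, depending only on M and ρ, with the following property: if (X,d) is a geometrically doubling metric space with constant M, if D₂ ≥ D₁ > 0 satisfy D₁/D₂ ≥ ρ, and if Z ⊆ X is a D₁-separated set, then Z can be written as a disjoint union of at most N sets, each of which is D₂-separated. -/
open Metric

/-- A metric space is geometrically doubling with constant `M` if every open ball of radius `r`
can be covered by at most `M` open balls of radius `r / 2`. -/
def GeomDoubling (X : Type*) [MetricSpace X] (M : ℕ) : Prop :=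
  ∀ (x : X) (r : ℝ), ∃ s : Finset X, s.card ≤ M ∧ ball x r ⊆ ⋃ y ∈ s, ball y (r / 2)

/-- Iterated doubling: a ball of radius `r` is covered by `M^k` balls of radius `r/2^k`. -/
lemma geomDoubling_iterate {X : Type} [MetricSpace X] {M : ℕ} (hX : GeomDoubling X M)
    (x : X) (r : ℝ) (k : ℕ) :
    ∃ s : Finset X, s.card ≤ M ^ k ∧ ball x r ⊆ ⋃ y ∈ s, ball y (r / 2 ^ k) := by
  classical
  induction k with
  | zero => exact ⟨{x}, by simp⟩
  | succ k ih =>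
    obtain ⟨s, hs1, hs2⟩ := ih
    have h := fun y : X => hX y (r / 2 ^ k)
    choose t ht1 ht2 using h
    refine ⟨s.biUnion t, ?_, ?_⟩
    · calc (s.biUnion t).card ≤ ∑ y ∈ s, (t y).card := Finset.card_biUnion_le
        _ ≤ ∑ _y ∈ s, M := Finset.sum_le_sum fun y _ => ht1 y
        _ = s.card * M := by simp [Finset.sum_const, Nat.smul_one_eq_cast]
        _ ≤ M ^ k * M := Nat.mul_le_mul_right _ hs1
        _ = M ^ (k + 1) := (pow_succ M k).symm
    · intro a ha
      obtain ⟨y, hy, hay⟩ := Set.mem_iUnion₂.mp (hs2 ha)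
      obtain ⟨z, hz, haz⟩ := Set.mem_iUnion₂.mp (ht2 y hay)
      refine Set.mem_iUnion₂.mpr ⟨z, Finset.mem_biUnion.mpr ⟨y, hy, hz⟩, ?_⟩
      rwa [show r / 2 ^ (k + 1) = r / 2 ^ k / 2 by rw [pow_succ, div_div]]

/-- In a doubling space, a separated set meets every ball in few points. -/
lemma sep_ball_card {X : Type} [MetricSpace X] {M : ℕ} (hX : GeomDoubling X M)
    {Z : Set X} {D₁ D₂ : ℝ} (hsep : ∀ x ∈ Z, ∀ y ∈ Z, x ≠ y → D₁ ≤ dist x y)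
    {k : ℕ} (hk : 2 * (D₂ / 2 ^ k) ≤ D₁) (x : X) :
    ({y | y ∈ Z ∧ dist x y < D₂}).Finite ∧ ({y | y ∈ Z ∧ dist x y < D₂}).ncard ≤ M ^ k := by
  obtain ⟨s, hs1, hs2⟩ := geomDoubling_iterate hX x D₂ k
  set T := {y | y ∈ Z ∧ dist x y < D₂} with hT
  have key : ∀ a, a ∈ ball x D₂ → ∃ y ∈ s, a ∈ ball y (D₂ / 2 ^ k) := by
    intro a ha
    simpa using Set.mem_iUnion₂.mp (hs2 ha)
  choose! f hf1 hf2 using key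
  have hTball : ∀ a ∈ T, a ∈ ball x D₂ := by
    intro a ha
    simpa [mem_ball, dist_comm] using ha.2
  have hinj : Set.InjOn f T := by
    intro a ha b hb hab
    by_contra hne
    have h1 := hf2 a (hTball a ha)
    have h2 := hf2 b (hTball b hb)
    rw [mem_ball] at h1 h2
    have : dist a b ≤ dist a (f a) + dist (f b) b := by
      rw [hab]; exact dist_triangle _ _ _
    rw [dist_comm (f b) b] at this
    have := hsep a ha.1 b hb.1 hne
    linarith
  have himg : f '' T ⊆ ↑s := by
    rintro _ ⟨a, ha, rfl⟩
    exact hf1 a (hTball a ha)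
  have hfin : T.Finite :=
    Set.Finite.of_finite_image (s.finite_toSet.subset himg) hinj
  refine ⟨hfin, ?_⟩
  calc T.ncard = (f '' T).ncard := (Set.ncard_image_of_injOn hinj).symm
    _ ≤ (↑s : Set X).ncard := Set.ncard_le_ncard himg s.finite_toSet
    _ = s.card := by rw [Set.ncard_coe_finset]
    _ ≤ M ^ k := hs1

/-- Greedy (transfinite) coloring: if each point has fewer than `N` close points of `Z`,
then there is an `N`-coloring in which equal colors force distance `≥ D₂`. -/
lemma exists_good_coloring {X : Type} [MetricSpace X] (Z : Set X) (D₂ : ℝ) (N : ℕ)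
    (hfin : ∀ x : X, ({y | y ∈ Z ∧ dist x y < D₂}).Finite)
    (hcard : ∀ x : X, ({y | y ∈ Z ∧ dist x y < D₂}).ncard < N) :
    ∃ c : X → Fin N, ∀ x ∈ Z, ∀ y ∈ Z, dist x y < D₂ → c x = c y → x = y := by
  classical
  have hN : ∀ _ : X, 0 < N := fun x => lt_of_le_of_lt (Nat.zero_le _) (hcard x)
  have wf : WellFounded (WellOrderingRel : X → X → Prop) := IsWellFounded.wf
  have free : ∀ (x : X) (ih : ∀ y, WellOrderingRel y x → Fin N),
      ∃ v : Fin N, ∀ y (_ : y ∈ Z) (_ : dist x y < D₂) (h3 : WellOrderingRel y x),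
        ih y h3 ≠ v := by
    intro x ih
    set T := {y | y ∈ Z ∧ dist x y < D₂} with hT
    set g : X → Fin N := fun y =>
      if h : WellOrderingRel y x then ih y h else ⟨0, hN x⟩ with hg
    have hBne : g '' T ≠ Set.univ := by
      intro h
      have h1 : (g '' T).ncard ≤ T.ncard := Set.ncard_image_le (hfin x)
      rw [h, Set.ncard_univ, Nat.card_eq_fintype_card, Fintype.card_fin] at h1
      exact absurd (lt_of_le_of_lt h1 (hcard x)) (lt_irrefl N)
    obtain ⟨v, hv⟩ := (Set.ne_univ_iff_exists_notMem _).mp hBne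
    refine ⟨v, fun y h1 h2 h3 hEq => hv ⟨y, ⟨h1, h2⟩, ?_⟩⟩
    rw [hg]; simp only [dif_pos h3]; exact hEq
  set c : X → Fin N := wf.fix (fun x ih => Classical.choose (free x ih)) with hc
  have hceq : ∀ x, c x = Classical.choose (free x (fun y _ => c y)) := by
    intro x
    rw [hc]
    exact wf.fix_eq _ x
  refine ⟨c, ?_⟩
  intro x hx y hy hd hcc
  by_contra hne
  rcases trichotomous_of WellOrderingRel x y with h | h | h
  · have hs := Classical.choose_spec (free y (fun z _ => c z)) x hx
      (by rwa [dist_comm]) h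
    rw [← hceq y] at hs
    exact hs hcc
  · exact hne h
  · have hs := Classical.choose_spec (free x (fun z _ => c z)) y hy hd h
    rw [← hceq x] at hs
    exact hs hcc.symm

/-- For every doubling constant `M` and every ratio `ρ ∈ (0,1]` there is `N ∈ ℕ`, depending only
on `M` and `ρ`, such that in any geometrically doubling metric space with constant `M`, any
`D₁`-separated set (with `0 < D₁ ≤ D₂` and `D₁/D₂ ≥ ρ`) is a disjoint union of at most `N`
`D₂`-separated sets. -/
theorem stmt3 (M : ℕ) (ρ : ℝ) (hρ : ρ ∈ Set.Ioc (0 : ℝ) 1) :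
    ∃ N : ℕ, ∀ (X : Type) [MetricSpace X], GeomDoubling X M →
      ∀ D₁ D₂ : ℝ, 0 < D₁ → D₁ ≤ D₂ → ρ ≤ D₁ / D₂ →
      ∀ Z : Set X, (∀ x ∈ Z, ∀ y ∈ Z, x ≠ y → D₁ ≤ dist x y) →
      ∃ F : Fin N → Set X,
        (∀ i j, i ≠ j → Disjoint (F i) (F j)) ∧
        Z = ⋃ i, F i ∧
        ∀ i, ∀ x ∈ F i, ∀ y ∈ F i, x ≠ y → D₂ ≤ dist x y := by
  obtain ⟨hρ0, hρ1⟩ := hρ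
  obtain ⟨k, hk⟩ := pow_unbounded_of_one_lt (2 / ρ) (one_lt_two (α := ℝ))
  refine ⟨M ^ k + 1, ?_⟩
  intro X _ hX D₁ D₂ hD1 hD12 hρd Z hsep
  have hD2 : 0 < D₂ := lt_of_lt_of_le hD1 hD12
  have h2k : (0:ℝ) < 2 ^ k := pow_pos two_pos k
  have hρ2k : 2 < ρ * 2 ^ k := by
    rw [div_lt_iff₀ hρ0] at hk
    calc (2:ℝ) < 2 ^ k * ρ := hk
      _ = ρ * 2 ^ k := mul_comm _ _
  have hρD : ρ * D₂ ≤ D₁ := by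
    rw [← le_div_iff₀ hD2]; exact hρd
  have hksep : 2 * (D₂ / 2 ^ k) ≤ D₁ := by
    rw [mul_div_assoc', div_le_iff₀ h2k]
    nlinarith
  have hball := fun x => sep_ball_card hX hsep hksep x
  obtain ⟨c, hc⟩ := exists_good_coloring Z D₂ (M ^ k + 1)
    (fun x => (hball x).1)
    (fun x => lt_of_le_of_lt (hball x).2 (Nat.lt_succ_self _))
  refine ⟨fun i => {x | x ∈ Z ∧ c x = i}, ?_, ?_, ?_⟩
  · intro i j hij
    rw [Set.disjoint_left]
    rintro a ⟨_, hai⟩ ⟨_, haj⟩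
    exact hij (hai ▸ haj ▸ rfl)
  · ext x
    simp only [Set.mem_iUnion, Set.mem_setOf_eq]
    exact ⟨fun hx => ⟨c x, hx, rfl⟩, fun ⟨i, hx, _⟩ => hx⟩
  · intro i x hx y hy hne
    by_contra hlt
    push_neg at hlt
    exact hne (hc x hx.1 y hy.1 hlt (hx.2.trans hy.2.symm))
end

section
/- Let (X,d) be a geometrically doubling metric space with constant M. There exists δ₀ ∈ (0,1), depending only on M, such that for every δ ∈ (0,δ₀) the following holds: given, for each k ∈ ℤ, a maximal δ^k-separated set {z_α^k : α ∈ A_k} with the nestedness property {z_α^k : α ∈ A_k} ⊆ {z_β^{k+1} : β ∈ A_{k+1}}, there exists a countable collection D = {Q_α^k : k ∈ ℤ, α ∈ A_k} of subsets of X such that: (i) X = ⋃_α Q_α^k for every k ∈ ℤ; (ii) for all P,Q ∈ D, P ∩ Q ∈ {∅, P, Q}; (iii) B(z_α^k, δ^k/5) ⊆ Q_α^k ⊆ B(z_α^k, 3δ^k); (iv) Q_α^k = ⋃ {Q_β^{k+m} : Q_β^{k+m} ⊆ Q_α^k} for every m ∈ ℕ. -/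
open Metric

/-!
Fix a parent map `p k : X → Z k` sending every point to a point of `Z k` at distance `< δ ^ k`,
chosen to be the unique point of `Z k` within `δ ^ k / 2` whenever there is one. For a point `x`,
the points of `Z k` within `2 δ ^ k` of `x` form a finite (by geometric doubling) nonempty set,
and `p k` maps the level-`(k + 1)` set into the level-`k` set; by Kőnig's lemma there is a thread
`c x : ℤ → X` through these sets with `p k (c x (k + 1)) = c x k`. The cube `Q k z` consists of
the points whose thread passes through `z` at level `k`. Since the threads of two points that
meet at level `l` coincide at all coarser levels, the cubes are nested, and the choice of `p`
forces every thread starting in `B(z, δ ^ k / 5)` through `z` at level `k`.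
-/

open Set CategoryTheory

namespace GeomDoubling

variable {X : Type*} [MetricSpace X] {M : ℕ}

theorem exists_finset_cover_ball_div_two_pow (hD : GeomDoubling X M) (n : ℕ) (x : X) (r : ℝ) :
    ∃ s : Finset X, ball x r ⊆ ⋃ y ∈ s, ball y (r / 2 ^ n) := by
  classical
  induction n generalizing x r with
  | zero => exact ⟨{x}, by simp⟩
  | succ n ih =>
    obtain ⟨s, -, hs⟩ := hD x r
    choose t ht using fun y : X => ih y (r / 2)
    refine ⟨s.biUnion t, hs.trans <| iUnion₂_subset fun y hy => (ht y).trans ?_⟩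
    rw [pow_succ', ← div_div]
    exact biUnion_subset_biUnion_left fun u hu => Finset.mem_biUnion.2 ⟨y, hy, hu⟩

theorem totallyBounded_ball (hD : GeomDoubling X M) (x : X) (r : ℝ) :
    TotallyBounded (ball x r) := by
  refine Metric.totallyBounded_iff.2 fun ε hε => ?_
  obtain ⟨n, hn⟩ := pow_unbounded_of_one_lt (r / ε) one_lt_two
  obtain ⟨s, hs⟩ := hD.exists_finset_cover_ball_div_two_pow n x r
  refine ⟨s, s.finite_toSet, hs.trans <| biUnion_mono subset_rfl fun y _ => ball_subset_ball ?_⟩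
  rw [div_lt_iff₀ hε] at hn
  rw [div_le_iff₀ (by positivity)]
  linarith

end GeomDoubling

theorem Set.Pairwise.eq_of_dist_lt_half {X : Type*} [MetricSpace X] {A : Set X} {ε : ℝ}
    (hA : A.Pairwise fun z w => ε ≤ dist z w) {x z w : X} (hz : z ∈ A) (hw : w ∈ A)
    (hxz : dist x z < ε / 2) (hxw : dist x w < ε / 2) : z = w := by
  by_contra hne
  linarith [hA hz hw hne, dist_triangle_left z w x]

theorem TotallyBounded.finite_inter_of_pairwise_le_dist {X : Type*} [MetricSpace X] {s A : Set X}
    (hs : TotallyBounded s) {ε : ℝ} (hε : 0 < ε) (hA : A.Pairwise fun z w => ε ≤ dist z w) :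
    (A ∩ s).Finite := by
  obtain ⟨t, ht, hst⟩ := Metric.totallyBounded_iff.1 hs (ε / 2) (half_pos hε)
  have hcover : A ∩ s ⊆ ⋃ y ∈ t, A ∩ ball y (ε / 2) := fun z ⟨hzA, hzs⟩ => by
    obtain ⟨y, hy, hzy⟩ := mem_iUnion₂.1 (hst hzs)
    exact mem_iUnion₂.2 ⟨y, hy, hzA, hzy⟩
  refine (ht.biUnion fun y _ => Subsingleton.finite ?_).subset hcover
  rintro z ⟨hzA, hz⟩ w ⟨hwA, hw⟩
  exact hA.eq_of_dist_lt_half hzA hwA (by rwa [dist_comm]) (by rwa [dist_comm])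

theorem GeomDoubling.countable_of_pairwise_le_dist {X : Type*} [MetricSpace X] {M : ℕ}
    (hD : GeomDoubling X M) {ε : ℝ} (hε : 0 < ε) {A : Set X}
    (hA : A.Pairwise fun z w => ε ≤ dist z w) : A.Countable := by
  rcases A.eq_empty_or_nonempty with rfl | ⟨x₀, -⟩
  · exact countable_empty
  refine (countable_iUnion fun n : ℕ =>
    ((hD.totallyBounded_ball x₀ n).finite_inter_of_pairwise_le_dist hε hA).countable).mono
    fun z hz => ?_
  obtain ⟨n, hn⟩ := exists_nat_gt (dist z x₀)
  exact mem_iUnion.2 ⟨n, hz, hn⟩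

namespace DyadicCubes

section Thread

variable {α : Type*} (p : ℤ → α → α)

/-- `ancestor p k n = p k ∘ p (k + 1) ∘ ⋯ ∘ p (k + n - 1)`, from level `k + n` down to level `k`. -/
def ancestor (k : ℤ) : ℕ → α → α
  | 0 => id
  | n + 1 => ancestor k n ∘ p (k + n)

theorem ancestor_add (k : ℤ) (m n : ℕ) :
    ancestor p k (m + n) = ancestor p k m ∘ ancestor p (k + m) n := by
  induction n with
  | zero => rfl
  | succ n ih =>
    rw [← Nat.add_assoc, ancestor, ancestor, ih, Nat.cast_add, ← add_assoc]
    rfl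

theorem ancestor_toNat_comp {k l m : ℤ} (hkl : k ≤ l) (hlm : l ≤ m) :
    ancestor p k (l - k).toNat ∘ ancestor p l (m - l).toNat = ancestor p k (m - k).toNat := by
  obtain ⟨a, rfl⟩ := Int.exists_add_of_le hkl
  obtain ⟨b, rfl⟩ := Int.exists_add_of_le hlm
  rw [show k + a - k = a by omega, show k + a + b - (k + a) = b by omega,
    show k + a + b - k = (a + b : ℕ) by omega]
  simp only [Int.toNat_natCast, ancestor_add]

variable {p} {S : ℤ → Set α}

theorem mapsTo_ancestor (hp : ∀ k, MapsTo (p k) (S (k + 1)) (S k)) (k : ℤ) (n : ℕ) :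
    MapsTo (ancestor p k n) (S (k + n)) (S k) := by
  induction n with
  | zero => simpa [ancestor] using mapsTo_id (S k)
  | succ n ih => exact ih.comp (by simpa [add_assoc] using hp (k + n))

theorem mapsTo_ancestor_toNat (hp : ∀ k, MapsTo (p k) (S (k + 1)) (S k)) {k l : ℤ} (hkl : k ≤ l) :
    MapsTo (ancestor p k (l - k).toNat) (S l) (S k) := by
  simpa [Int.toNat_of_nonneg (sub_nonneg.2 hkl)] using mapsTo_ancestor hp k (l - k).toNat

variable (p S) in
def inverseSystem (hp : ∀ k, MapsTo (p k) (S (k + 1)) (S k)) : ℤᵒᵖ ⥤ Type _ where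
  obj l := S l.unop
  map f := ↾((mapsTo_ancestor_toNat hp (leOfHom f.unop)).restrict)
  map_id l := by
    ext w
    simp [ancestor]
  map_comp f g := by
    ext w
    exact (congrFun (ancestor_toNat_comp p (leOfHom g.unop) (leOfHom f.unop)) w).symm

variable (p) in
def IsThread (c : ℤ → α) : Prop :=
  ∀ k, p k (c (k + 1)) = c k

/-- Kőnig's lemma for an inverse system of finite nonempty sets indexed by `ℤ`. -/
theorem exists_isThread (hfin : ∀ k, (S k).Finite) (hne : ∀ k, (S k).Nonempty)
    (hp : ∀ k, MapsTo (p k) (S (k + 1)) (S k)) : ∃ c : ℤ → α, IsThread p c ∧ ∀ k, c k ∈ S k := by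
  have : ∀ l, Finite ((inverseSystem p S hp).obj l) := fun l => (hfin l.unop).to_subtype
  have : ∀ l, Nonempty ((inverseSystem p S hp).obj l) := fun l => (hne l.unop).to_subtype
  obtain ⟨c, hc⟩ := nonempty_sections_of_finite_inverse_system (inverseSystem p S hp)
  refine ⟨fun k => (c (.op k)).1, fun k => ?_, fun k => (c _).2⟩
  have := congrArg Subtype.val (hc (homOfLE (show k ≤ k + 1 by omega)).op)
  change ancestor p k (k + 1 - k).toNat _ = _ at this
  simpa [ancestor] using this

theorem IsThread.eq_of_le {c c' : ℤ → α} (hc : IsThread p c) (hc' : IsThread p c') {k l : ℤ}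
    (hkl : k ≤ l) (h : c l = c' l) : c k = c' k := by
  induction l, hkl using Int.leInduction with
  | base => exact h
  | succ l _ ih => exact ih (by rw [← hc l, ← hc' l, h])

variable {ι : Type*} {c : ι → ℤ → α}

theorem setOf_isThread_eq_subset (hc : ∀ i, IsThread p (c i)) {k l : ℤ} (hkl : k ≤ l) (j : ι) :
    {i | c i l = c j l} ⊆ {i | c i k = c j k} :=
  fun i hi => (hc i).eq_of_le (hc j) hkl hi

theorem setOf_isThread_eq_nested (hc : ∀ i, IsThread p (c i)) (k l : ℤ) (a b : α) :
    {i | c i k = a} ∩ {i | c i l = b} = ∅ ∨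
      {i | c i k = a} ⊆ {i | c i l = b} ∨ {i | c i l = b} ⊆ {i | c i k = a} := by
  rcases eq_empty_or_nonempty ({i | c i k = a} ∩ {i | c i l = b}) with h | ⟨j, rfl, rfl⟩
  · exact Or.inl h
  rcases le_total k l with hkl | hlk
  · exact Or.inr (Or.inr (setOf_isThread_eq_subset hc hkl j))
  · exact Or.inr (Or.inl (setOf_isThread_eq_subset hc hlk j))

theorem setOf_isThread_eq_eq_biUnion (hc : ∀ i, IsThread p (c i)) {k l : ℤ} (hkl : k ≤ l)
    {T : Set α} (hT : ∀ i, c i l ∈ T) (a : α) :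
    {i | c i k = a} = ⋃ b ∈ {b ∈ T | {i | c i l = b} ⊆ {i | c i k = a}}, {i | c i l = b} := by
  refine Subset.antisymm (fun j hj => ?_) (iUnion₂_subset fun b hb => hb.2)
  refine mem_iUnion₂.2 ⟨c j l, ⟨hT j, ?_⟩, rfl⟩
  rw [← show c j k = a from hj]
  exact setOf_isThread_eq_subset hc hkl j

end Thread

variable {X : Type*} [MetricSpace X] {δ : ℝ} {Z : ℤ → Set X}

structure IsParentMap (Z : ℤ → Set X) (δ : ℝ) (p : ℤ → X → X) : Prop where
  mem : ∀ k x, p k x ∈ Z k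
  dist_lt : ∀ k x, dist x (p k x) < δ ^ k
  eq_of_dist_lt : ∀ k x, ∀ z ∈ Z k, dist x z < δ ^ k / 2 → p k x = z

theorem exists_isParentMap (hsep : ∀ k, (Z k).Pairwise fun z w => δ ^ k ≤ dist z w)
    (hmax : ∀ (k : ℤ) (x : X), ∃ z ∈ Z k, dist x z < δ ^ k) : ∃ p, IsParentMap Z δ p := by
  have : ∀ k (x : X), ∃ y ∈ Z k, dist x y < δ ^ k ∧
      ∀ z ∈ Z k, dist x z < δ ^ k / 2 → y = z := by
    intro k x
    by_cases h : ∃ y ∈ Z k, dist x y < δ ^ k / 2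
    · obtain ⟨y, hy, hxy⟩ := h
      refine ⟨y, hy, by linarith [dist_nonneg (x := x) (y := y)], fun z hz hxz => ?_⟩
      exact (hsep k).eq_of_dist_lt_half hy hz hxy hxz
    · push Not at h
      obtain ⟨y, hy, hxy⟩ := hmax k x
      exact ⟨y, hy, hxy, fun z hz hxz => absurd hxz (not_lt.2 (h z hz))⟩
  choose p hpZ hpdist hpeq using this
  exact ⟨p, ⟨hpZ, hpdist, hpeq⟩⟩

theorem exists_isThread_near {M : ℕ} (hD : GeomDoubling X M) (hδ0 : 0 < δ) (hδ : δ ≤ 1 / 2)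
    (hsep : ∀ k, (Z k).Pairwise fun z w => δ ^ k ≤ dist z w)
    (hmax : ∀ (k : ℤ) (x : X), ∃ z ∈ Z k, dist x z < δ ^ k) {p : ℤ → X → X}
    (hp : IsParentMap Z δ p) (x : X) :
    ∃ c : ℤ → X, IsThread p c ∧ ∀ k, c k ∈ Z k ∩ ball x (2 * δ ^ k) := by
  refine exists_isThread (fun k => ?_) (fun k => ?_) (fun k w ⟨hwZ, hwx⟩ => ⟨hp.mem k w, ?_⟩)
  · exact (hD.totallyBounded_ball x _).finite_inter_of_pairwise_le_dist (zpow_pos hδ0 k) (hsep k)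
  · obtain ⟨z, hz, hxz⟩ := hmax k x
    exact ⟨z, hz, by rw [mem_ball, dist_comm]; linarith [zpow_pos hδ0 k]⟩
  · rw [mem_ball] at hwx ⊢
    have hstep : δ ^ (k + 1) = δ ^ k * δ := zpow_add_one₀ hδ0.ne' k
    calc dist (p k w) x ≤ dist w (p k w) + dist w x := dist_triangle_left _ _ _
      _ < δ ^ k + 2 * δ ^ (k + 1) := add_lt_add (hp.dist_lt k w) hwx
      _ ≤ 2 * δ ^ k := by rw [hstep]; nlinarith [zpow_pos hδ0 k]

theorem IsThread.eq_of_dist_lt (hδ0 : 0 < δ) (hδ : δ < 3 / 20) {p : ℤ → X → X}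
    (hp : IsParentMap Z δ p) {c : ℤ → X} (hc : IsThread p c) {x : X} {k : ℤ}
    (hcx : c (k + 1) ∈ ball x (2 * δ ^ (k + 1))) {z : X} (hz : z ∈ Z k)
    (hxz : x ∈ ball z (δ ^ k / 5)) : c k = z := by
  rw [← hc k]
  refine hp.eq_of_dist_lt k _ z hz ?_
  have hstep : δ ^ (k + 1) = δ ^ k * δ := zpow_add_one₀ hδ0.ne' k
  calc dist (c (k + 1)) z ≤ dist (c (k + 1)) x + dist x z := dist_triangle _ _ _
    _ < 2 * δ ^ (k + 1) + δ ^ k / 5 := add_lt_add hcx hxz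
    _ ≤ δ ^ k / 2 := by rw [hstep]; nlinarith [zpow_pos hδ0 k]

end DyadicCubes

open DyadicCubes in
/-- Construction of dyadic cubes: there is `δ₀ ∈ (0,1)` depending only on `M` such that for
every `δ ∈ (0,δ₀)` and every family of nested maximal `δ^k`-separated sets `Z k ⊆ X`, `k ∈ ℤ`,
there exists a countable collection of dyadic cubes `Q k z` (for `z ∈ Z k`) satisfying
(i) each level covers `X`; (ii) any two cubes are disjoint or one contains the other;
(iii) `B(z, δ^k/5) ⊆ Q k z ⊆ B(z, 3δ^k)`; (iv) every cube is the union of its level-`(k+m)`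
descendants. -/
theorem stmt5 (M : ℕ) :
    ∃ δ₀ : ℝ, δ₀ ∈ Set.Ioo (0 : ℝ) 1 ∧
    ∀ (X : Type) [MetricSpace X], GeomDoubling X M →
    ∀ δ : ℝ, 0 < δ → δ < δ₀ →
    ∀ Z : ℤ → Set X,
      (∀ k, ∀ z ∈ Z k, ∀ w ∈ Z k, z ≠ w → δ ^ k ≤ dist z w) →
      (∀ (k : ℤ) (x : X), ∃ z ∈ Z k, dist x z < δ ^ k) →
      (∀ k, Z k ⊆ Z (k + 1)) →
      ∃ Q : ℤ → X → Set X,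
        Set.Countable {p : ℤ × X | p.2 ∈ Z p.1} ∧
        (∀ k : ℤ, (⋃ z ∈ Z k, Q k z) = Set.univ) ∧
        (∀ (k l : ℤ) (z w : X), z ∈ Z k → w ∈ Z l →
          Q k z ∩ Q l w = ∅ ∨ Q k z ⊆ Q l w ∨ Q l w ⊆ Q k z) ∧
        (∀ k : ℤ, ∀ z ∈ Z k, ball z (δ ^ k / 5) ⊆ Q k z ∧ Q k z ⊆ ball z (3 * δ ^ k)) ∧
        (∀ (k : ℤ) (m : ℕ), ∀ z ∈ Z k,
          Q k z = ⋃ w ∈ {w ∈ Z (k + (m : ℤ)) | Q (k + (m : ℤ)) w ⊆ Q k z}, Q (k + (m : ℤ)) w) := by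
  refine ⟨1 / 8, ⟨by norm_num, by norm_num⟩, fun X _ hD δ hδ0 hδ Z hsep hmax _ => ?_⟩
  obtain ⟨p, hp⟩ := exists_isParentMap hsep hmax
  choose c hc hcZ using exists_isThread_near hD hδ0 (by linarith) hsep hmax hp
  refine ⟨fun k z => {x | c x k = z}, ?_, fun k => ?_, fun k l z w _ _ => ?_,
    fun k z hz => ⟨?_, ?_⟩, fun k m z _ => ?_⟩
  · refine (countable_univ.prod (countable_iUnion fun k =>
      hD.countable_of_pairwise_le_dist (zpow_pos hδ0 k) (hsep k))).mono ?_
    exact fun q hq => ⟨mem_univ _, mem_iUnion.2 ⟨q.1, hq⟩⟩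
  · exact eq_univ_of_forall fun x => mem_iUnion₂.2 ⟨c x k, (hcZ x k).1, rfl⟩
  · exact setOf_isThread_eq_nested hc k l z w
  · exact fun x hx => (hc x).eq_of_dist_lt hδ0 (by linarith) hp (hcZ x (k + 1)).2 hz hx
  · rintro x rfl
    have hcx := (hcZ x k).2
    rw [mem_ball] at hcx
    rw [mem_ball']
    linarith [zpow_pos hδ0 k]
  · exact setOf_isThread_eq_eq_biUnion hc (by omega) (fun x => (hcZ x (k + m)).1) z
end

section
/- Let (X,d) be a geometrically doubling metric space with doubling constant M and let n ∈ ℕ, n ≥ 1. Then for every δ ∈ (0, 1/(n·168·M⁸)) there exist K ∈ ℕ (depending only on δ and M) and dyadic systems D(1), …, D(K) with parameter δ, such that: for every p ∈ ℕ and all balls B₁, B₂, …, B_n in X there exist ω ∈ {1,…,K} and cubes Q_{B₁}, …, Q_{B_n} ∈ D(ω) such that for every i ∈ {1,…,n}: (i) B_i ⊆ Q_{B_i}; (ii) ℓ(Q_{B_i}) ≤ δ^(−2)·r(B_i), where r(B_i) is the radius of B_i; (iii) δ^(−p)·B_i ⊆ Q_{B_i}^{(p)}, where δ^(−p)·B_i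 is the ball concentric with B_i of δ^(−p) times its radius and Q_{B_i}^{(p)} is the unique ancestor of Q_{B_i} in D(ω) of level lev(Q_{B_i}) − p. -/
open Metric

/-- A dyadic system with parameter `δ ∈ (0,1)`: a countable collection of cubes `cube k z`
with centre points `idx k` forming maximal `δ^k`-separated sets, satisfying the standard
properties of dyadic cubes. -/
structure DyadicSystem (X : Type*) [MetricSpace X] (δ : ℝ) where
  idx : ℤ → Set X
  cube : ℤ → X → Set X
  countable : ∀ k, (idx k).Countable
  separated : ∀ k : ℤ, ∀ z ∈ idx k, ∀ w ∈ idx k, z ≠ w → δ ^ k ≤ dist z w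
  maximal : ∀ (k : ℤ) (x : X), ∃ z ∈ idx k, dist x z < δ ^ k
  covers : ∀ k : ℤ, (⋃ z ∈ idx k, cube k z) = Set.univ
  tree : ∀ (k l : ℤ) (z w : X), z ∈ idx k → w ∈ idx l →
    cube k z ∩ cube l w = ∅ ∨ cube k z ⊆ cube l w ∨ cube l w ⊆ cube k z
  ball_subset : ∀ k : ℤ, ∀ z ∈ idx k, ball z (δ ^ k / 5) ⊆ cube k z
  subset_ball : ∀ k : ℤ, ∀ z ∈ idx k, cube k z ⊆ ball z (3 * δ ^ k)
  union_descendants : ∀ (k : ℤ) (m : ℕ), ∀ z ∈ idx k,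
    cube k z = ⋃ w ∈ {w ∈ idx (k + (m : ℤ)) | cube (k + (m : ℤ)) w ⊆ cube k z},
      cube (k + (m : ℤ)) w

/-!
Fix once and for all, for every level `k`, a maximal `δ ^ k`-separated set of centres. For a
threshold `θ ∈ (0, 1/2]`, a point `w` takes as its parent of level `k` a centre `z` with
`dist w z < infDist w (net k) + θ δ ^ k`. By König's lemma every point `x` has a thread: one
centre per level, within `2 δ ^ k` of `x`, each the parent of the next. The cube of level `k`
and centre `z` is the set of points whose thread passes through `z`, and this gives a dyadic
system for each `θ`.

Let `ρ ≤ δ ^ (k + 1)`. If no centre `z` has `dist x z - infDist x (net k)` within `6 δ ^ (k + 1)`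
of `θ δ ^ k`, then every point of `ball x ρ` has the same admissible parents as `x`, so the
whole ball lies in the level-`k` cube containing `x`. For a fixed point and level, only the at
most `M ^ 2` centres within `2 δ ^ k` can spoil a threshold, and each spoils at most one
threshold out of a family spaced `12 δ` apart. Hence among `K = 2 n M ^ 2 + 1` such thresholds
one suits all `2 n` pairs at once: each ball `B(x i, r i)` at the level `k i` with
`δ ^ (k i) ≈ δ ^ (-2) * r i`, and at the level `k i - p`.
-/

open Set Filter

section Doubling

variable {X : Type*} [MetricSpace X] {M : ℕ}

lemma GeomDoubling.exists_cover_pow (hGD : GeomDoubling X M) (x : X) (r : ℝ) (j : ℕ) :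
    ∃ F : Finset X, F.card ≤ M ^ j ∧ ball x r ⊆ ⋃ y ∈ F, ball y (r / 2 ^ j) := by
  classical
  induction j with
  | zero => exact ⟨{x}, by simp, by simp⟩
  | succ j ih =>
    obtain ⟨F, hFcard, hFcover⟩ := ih
    choose G hGcard hGcover using fun y : X => hGD y (r / 2 ^ j)
    refine ⟨F.biUnion G, ?_, fun z hz => ?_⟩
    · calc (F.biUnion G).card ≤ F.card * M :=
            Finset.card_biUnion_le_card_mul _ _ _ fun y _ => hGcard y
        _ ≤ M ^ j * M := Nat.mul_le_mul_right _ hFcard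
        _ = M ^ (j + 1) := (pow_succ M j).symm
    · obtain ⟨y, hy, hzy⟩ := mem_iUnion₂.1 (hFcover hz)
      obtain ⟨w, hw, hzw⟩ := mem_iUnion₂.1 (hGcover y hzy)
      rw [pow_succ, ← div_div]
      exact mem_iUnion₂.2 ⟨w, Finset.mem_biUnion.2 ⟨y, hy, hw⟩, hzw⟩

lemma GeomDoubling.encard_inter_ball_le (hGD : GeomDoubling X M) {A : Set X} {Λ : ℝ}
    (hA : A.Pairwise fun z w => Λ ≤ dist z w) (x : X) {R : ℝ} {j : ℕ}
    (hR : 2 * R ≤ 2 ^ j * Λ) : (A ∩ ball x R).encard ≤ M ^ j := by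
  obtain ⟨F, hFcard, hFcover⟩ := hGD.exists_cover_pow x R j
  have hcenter : ∀ z ∈ A ∩ ball x R, ∃ y ∈ F, z ∈ ball y (R / 2 ^ j) := fun z hz =>
    by simpa using hFcover hz.2
  choose! φ hφF hφball using hcenter
  have hinj : InjOn φ (A ∩ ball x R) := by
    intro a ha b hb hab
    by_contra hne
    have hlt : dist a b < 2 * (R / 2 ^ j) := by
      have h1 := mem_ball.1 (hφball a ha)
      have h2 := mem_ball'.1 (hab ▸ hφball b hb)
      linarith [dist_triangle a (φ a) b]
    have h2j : 2 * (R / 2 ^ j) ≤ Λ := by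
      rw [mul_div_assoc', div_le_iff₀ (by positivity)]; linarith
    exact absurd (hA ha.1 hb.1 hne) (by linarith)
  calc (A ∩ ball x R).encard ≤ (F : Set X).encard := encard_le_encard_of_injOn hφF hinj
    _ = F.card := encard_coe_eq_coe_finsetCard F
    _ ≤ M ^ j := by exact_mod_cast hFcard

lemma GeomDoubling.countable_of_pairwise (hGD : GeomDoubling X M) {A : Set X} {Λ : ℝ}
    (hΛ : 0 < Λ) (hA : A.Pairwise fun z w => Λ ≤ dist z w) : A.Countable := by
  rcases A.eq_empty_or_nonempty with rfl | ⟨x₀, -⟩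
  · exact countable_empty
  have hunion : A ⊆ ⋃ m : ℕ, A ∩ ball x₀ m := fun z hz =>
    mem_iUnion.2 ⟨⌈dist z x₀⌉₊ + 1, hz, by
      rw [mem_ball]; push_cast; linarith [Nat.le_ceil (dist z x₀)]⟩
  refine (countable_iUnion fun m => ?_).mono hunion
  obtain ⟨j, hj⟩ := pow_unbounded_of_one_lt (2 * (m : ℝ) / Λ) one_lt_two
  exact (finite_of_encard_le_coe (hGD.encard_inter_ball_le hA x₀
    (le_of_lt ((div_lt_iff₀ hΛ).1 hj)))).countable

end Doubling

lemma exists_maximal_pairwise_dist_le {X : Type*} [MetricSpace X] {Λ : ℝ} (hΛ : 0 < Λ) :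
    ∃ A : Set X, (A.Pairwise fun z w => Λ ≤ dist z w) ∧ ∀ x : X, ∃ z ∈ A, dist x z < Λ := by
  obtain ⟨A, hA⟩ := zorn_subset {A : Set X | A.Pairwise fun z w => Λ ≤ dist z w}
    fun c hcS hc => ⟨⋃₀ c, hc.pairwise_sUnion.2 hcS, fun _ => subset_sUnion_of_mem⟩
  refine ⟨A, hA.prop, fun x => ?_⟩
  by_contra! hfar
  have hins : (insert x A).Pairwise fun z w => Λ ≤ dist z w :=
    pairwise_insert.2 ⟨hA.prop, fun z hz _ => ⟨hfar z hz, dist_comm z x ▸ hfar z hz⟩⟩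
  have hx : x ∈ A := hA.eq_of_subset hins (subset_insert x A) ▸ mem_insert x A
  linarith [hfar x hx, dist_self x]

lemma exists_compatible_seq_on_Ico {α : Type*} {T : ℤ → Set α}
    (hne : ∀ k, (T k).Nonempty) {f : ℤ → α → α} (hf : ∀ k, MapsTo (f k) (T (k + 1)) (T k))
    (b : ℤ) (m : ℕ) :
    ∃ g : ℤ → α, (∀ k, g k ∈ T k) ∧ ∀ k, b - m ≤ k → k < b → f k (g (k + 1)) = g k := by
  induction m with
  | zero => exact ⟨fun k => (hne k).some, fun k => (hne k).some_mem, fun k h h' => by omega⟩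
  | succ m ih =>
    obtain ⟨g, hgT, hgf⟩ := ih
    set a := b - m - 1
    refine ⟨Function.update g a (f a (g (a + 1))), fun k => ?_, fun k hk hk' => ?_⟩
    · rcases eq_or_ne k a with rfl | hka
      · simpa using hf a (hgT (a + 1))
      · simpa [hka] using hgT k
    · rcases eq_or_ne k a with rfl | hka
      · simp
      · simp [hka, show k + 1 ≠ a by omega, hgf k (by omega) hk']

/-- König's lemma over `ℤ`. -/
lemma exists_compatible_seq {α : Type*} {T : ℤ → Set α} (hfin : ∀ k, (T k).Finite)
    (hne : ∀ k, (T k).Nonempty) {f : ℤ → α → α} (hf : ∀ k, MapsTo (f k) (T (k + 1)) (T k)) :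
    ∃ g : ℤ → α, (∀ k, g k ∈ T k) ∧ ∀ k, f k (g (k + 1)) = g k := by
  choose h hhT hhf using fun N : ℕ => exists_compatible_seq_on_Ico hne hf N (2 * N)
  have hlim : ∀ k, ∃ v ∈ T k, ∀ᶠ N in (hyperfilter ℕ : Filter ℕ), h N k = v := fun k =>
    (Ultrafilter.eventually_exists_mem_iff (hfin k)).1
      (Eventually.of_forall fun N => ⟨h N k, hhT N k, rfl⟩)
  choose g hgT hg using hlim
  refine ⟨g, hgT, fun k => ?_⟩
  have hlarge : ∀ᶠ N in (hyperfilter ℕ : Filter ℕ), k.natAbs < N :=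
    hyperfilter_le_cofinite (Nat.cofinite_eq_atTop ▸ eventually_gt_atTop _)
  obtain ⟨N, hN, hN1, hk⟩ := ((hg k).and ((hg (k + 1)).and hlarge)).exists
  rw [← hN, ← hN1]
  exact hhf N k (by push_cast; omega) (by omega)

structure LevelNets (X : Type*) [MetricSpace X] (δ : ℝ) where
  net : ℤ → Set X
  separated : ∀ k, (net k).Pairwise fun z w => δ ^ k ≤ dist z w
  maximal : ∀ k x, ∃ z ∈ net k, dist x z < δ ^ k

lemma LevelNets.nonempty (X : Type*) [MetricSpace X] {δ : ℝ} (hδ : 0 < δ) :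
    Nonempty (LevelNets X δ) := by
  choose A hA using fun k : ℤ => exists_maximal_pairwise_dist_le (X := X) (zpow_pos hδ k)
  exact ⟨⟨A, fun k => (hA k).1, fun k => (hA k).2⟩⟩

namespace LevelNets

variable {X : Type*} [MetricSpace X] {δ : ℝ} (N : LevelNets X δ) {θ : ℝ}

lemma net_nonempty (k : ℤ) (x : X) : (N.net k).Nonempty :=
  let ⟨z, hz, _⟩ := N.maximal k x; ⟨z, hz⟩

lemma infDist_lt (k : ℤ) (x : X) : infDist x (N.net k) < δ ^ k :=
  let ⟨_, hz, hxz⟩ := N.maximal k x; (infDist_le_dist_of_mem hz).trans_lt hxz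

def admissibleParents (θ : ℝ) (k : ℤ) (w : X) : Set X :=
  {z ∈ N.net k | dist w z < infDist w (N.net k) + θ * δ ^ k}

noncomputable def parent (θ : ℝ) (k : ℤ) (w : X) : X :=
  have : Nonempty X := ⟨w⟩
  Classical.epsilon (· ∈ N.admissibleParents θ k w)

lemma parent_mem (hδ : 0 < δ) (hθ : 0 < θ) (k : ℤ) (w : X) :
    N.parent θ k w ∈ N.admissibleParents θ k w := by
  have hlt : infDist w (N.net k) < infDist w (N.net k) + θ * δ ^ k :=
    lt_add_of_pos_right _ (mul_pos hθ (zpow_pos hδ k))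
  exact Classical.epsilon_spec ((infDist_lt_iff (N.net_nonempty k w)).1 hlt)

lemma parent_congr {k : ℤ} {w w' : X}
    (h : N.admissibleParents θ k w = N.admissibleParents θ k w') :
    N.parent θ k w = N.parent θ k w' := by
  simp only [parent, h]

lemma parent_mapsTo (hδ0 : 0 < δ) (hδ : δ ≤ 1 / 8) (hθ0 : 0 < θ) (hθ : θ ≤ 1 / 2)
    (x : X) (k : ℤ) :
    MapsTo (N.parent θ k) (N.net (k + 1) ∩ ball x (2 * δ ^ (k + 1)))
      (N.net k ∩ ball x (2 * δ ^ k)) := by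
  rintro z ⟨-, hxz⟩
  obtain ⟨hp, hzp⟩ := N.parent_mem hδ0 hθ0 k z
  refine ⟨hp, ?_⟩
  rw [mem_ball'] at hxz ⊢
  rw [zpow_add_one₀ hδ0.ne'] at hxz
  have hΛ := zpow_pos hδ0 k
  have hinf : infDist z (N.net k) ≤ infDist x (N.net k) + dist z x :=
    infDist_le_infDist_add_dist
  have hδΛ : 4 * (δ ^ k * δ) ≤ δ ^ k / 2 := by nlinarith
  have hθΛ : θ * δ ^ k ≤ δ ^ k / 2 := by nlinarith
  linarith [N.infDist_lt k x, dist_triangle x z (N.parent θ k z), dist_comm z x]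

def IsThread (θ : ℝ) (x : X) (g : ℤ → X) : Prop :=
  (∀ k, g k ∈ N.net k ∩ ball x (2 * δ ^ k)) ∧ ∀ k, N.parent θ k (g (k + 1)) = g k

lemma exists_isThread {M : ℕ} (hGD : GeomDoubling X M) (hδ0 : 0 < δ) (hδ : δ ≤ 1 / 8)
    (hθ0 : 0 < θ) (hθ : θ ≤ 1 / 2) (x : X) : ∃ g, N.IsThread θ x g := by
  refine exists_compatible_seq (fun k => ?_) (fun k => ?_) (N.parent_mapsTo hδ0 hδ hθ0 hθ x)
  · refine finite_of_encard_le_coe (hGD.encard_inter_ball_le (N.separated k) x (j := 2) ?_)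
    linarith [zpow_pos hδ0 k]
  · obtain ⟨z, hz, hxz⟩ := N.maximal k x
    exact ⟨z, hz, mem_ball'.2 (by linarith [zpow_pos hδ0 k])⟩

noncomputable def thread (θ : ℝ) (x : X) : ℤ → X :=
  have : Nonempty (ℤ → X) := ⟨fun _ => x⟩
  Classical.epsilon (N.IsThread θ x)

def cube (θ : ℝ) (k : ℤ) (z : X) : Set X := {y | N.thread θ y k = z}

/-- Moving `x` by less than `3 δ ^ (k + 1)` changes `dist x z - infDist x (N.net k)` by less than
`6 δ ^ (k + 1)`, so under this margin the admissible parents do not change. -/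
def StableAt (θ : ℝ) (k : ℤ) (x : X) : Prop :=
  ∀ z ∈ N.net k, 6 * δ ^ (k + 1) ≤ |dist x z - infDist x (N.net k) - θ * δ ^ k|

lemma admissibleParents_eq_of_stableAt {k : ℤ} {x w : X} (hx : N.StableAt θ k x)
    (hw : dist x w < 3 * δ ^ (k + 1)) :
    N.admissibleParents θ k w = N.admissibleParents θ k x := by
  ext z
  refine and_congr_right fun hz => ?_
  have hdist := abs_le.1 (abs_dist_sub_le w x z)
  have hinf : infDist x (N.net k) ≤ infDist w (N.net k) + dist x w :=
    infDist_le_infDist_add_dist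
  have hinf' : infDist w (N.net k) ≤ infDist x (N.net k) + dist w x :=
    infDist_le_infDist_add_dist
  rw [dist_comm w x] at hdist hinf'
  rcases le_abs'.1 (hx z hz) with h | h <;> constructor <;> intro <;> linarith

section Threads

variable {N} (hT : ∀ x, ∃ g, N.IsThread θ x g)
include hT

lemma thread_mem (x : X) (k : ℤ) : N.thread θ x k ∈ N.net k ∩ ball x (2 * δ ^ k) :=
  (Classical.epsilon_spec (hT x)).1 k

lemma parent_thread (x : X) (k : ℤ) : N.parent θ k (N.thread θ x (k + 1)) = N.thread θ x k :=
  (Classical.epsilon_spec (hT x)).2 k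

lemma thread_eq_of_le {k l : ℤ} (hkl : k ≤ l) {x y : X} (h : N.thread θ x l = N.thread θ y l) :
    N.thread θ x k = N.thread θ y k := by
  obtain ⟨n, rfl⟩ : ∃ n : ℕ, k = l - n := ⟨(l - k).toNat, by omega⟩
  induction n with
  | zero => simpa using h
  | succ n ih =>
    have hstep : l - (n + 1 : ℕ) + 1 = l - n := by push_cast; ring
    rw [← parent_thread hT x, ← parent_thread hT y, hstep, ih (by omega)]

lemma cube_thread_subset {k l : ℤ} (hkl : k ≤ l) (x : X) :
    N.cube θ l (N.thread θ x l) ⊆ N.cube θ k (N.thread θ x k) :=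
  fun _ hy => thread_eq_of_le hT hkl hy

lemma cube_subset_ball (k : ℤ) (z : X) : N.cube θ k z ⊆ ball z (2 * δ ^ k) := by
  rintro y rfl
  exact mem_ball'.1 (thread_mem hT y k).2

/-- A point of `ball z (δ ^ k / 5)` has its level-`(k + 1)` centre so close to `z` that `z` is
its only admissible parent. -/
lemma ball_subset_cube (hδ0 : 0 < δ) (hδ : δ ≤ 1 / 40) (hθ0 : 0 < θ) (hθ : θ ≤ 1 / 2)
    {k : ℤ} {z : X} (hz : z ∈ N.net k) : ball z (δ ^ k / 5) ⊆ N.cube θ k z := by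
  intro x hx
  set w := N.thread θ x (k + 1)
  have hxw : dist x w < 2 * (δ ^ k * δ) := by
    rw [← zpow_add_one₀ hδ0.ne']; exact mem_ball'.1 (thread_mem hT x (k + 1)).2
  have hwz : dist w z < δ ^ k / 5 + 2 * (δ ^ k * δ) := by
    linarith [dist_triangle w x z, dist_comm w x, mem_ball.1 hx]
  have hunique : ∀ z' ∈ N.admissibleParents θ k w, z' = z := by
    rintro z' ⟨hz', hwz'⟩
    by_contra hne
    have hsep : δ ^ k ≤ dist z z' := N.separated k hz hz' (Ne.symm hne)
    have hinf : infDist w (N.net k) ≤ dist w z := infDist_le_dist_of_mem hz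
    have hΛ := zpow_pos hδ0 k
    have hδΛ : 4 * (δ ^ k * δ) ≤ δ ^ k / 10 := by nlinarith
    have hθΛ : θ * δ ^ k ≤ δ ^ k / 2 := by nlinarith
    linarith [dist_triangle z w z', dist_comm z w]
  show N.thread θ x k = z
  rw [← parent_thread hT x k]
  exact hunique _ (N.parent_mem hδ0 hθ0 k w)

lemma ball_subset_cube_of_stableAt (hδ0 : 0 < δ) {k : ℤ} {x : X} (hx : N.StableAt θ k x)
    {ρ : ℝ} (hρ : ρ ≤ δ ^ (k + 1)) :
    ball x ρ ⊆ N.cube θ k (N.thread θ x k) := by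
  intro y hy
  have hyc : dist x (N.thread θ y (k + 1)) < 3 * δ ^ (k + 1) := by
    linarith [dist_triangle x y (N.thread θ y (k + 1)), mem_ball'.1 (thread_mem hT y (k + 1)).2,
      mem_ball'.1 hy]
  have hxc : dist x (N.thread θ x (k + 1)) < 3 * δ ^ (k + 1) := by
    linarith [mem_ball'.1 (thread_mem hT x (k + 1)).2, zpow_pos hδ0 (k + 1)]
  show N.thread θ y k = N.thread θ x k
  rw [← parent_thread hT y, ← parent_thread hT x]
  exact N.parent_congr ((N.admissibleParents_eq_of_stableAt hx hyc).trans
    (N.admissibleParents_eq_of_stableAt hx hxc).symm)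

end Threads

noncomputable def toDyadicSystem {M : ℕ} (hGD : GeomDoubling X M) (hδ0 : 0 < δ)
    (hδ : δ ≤ 1 / 40) (hθ0 : 0 < θ) (hθ : θ ≤ 1 / 2) (hT : ∀ x, ∃ g, N.IsThread θ x g) :
    DyadicSystem X δ where
  idx := N.net
  cube := N.cube θ
  countable k := hGD.countable_of_pairwise (zpow_pos hδ0 k) (N.separated k)
  separated k _ hz _ hw hne := N.separated k hz hw hne
  maximal := N.maximal
  covers k := eq_univ_of_forall fun x => mem_iUnion₂.2 ⟨_, (thread_mem hT x k).1, rfl⟩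
  tree k l z w _ _ := by
    rcases (N.cube θ k z ∩ N.cube θ l w).eq_empty_or_nonempty with h | ⟨y, rfl, rfl⟩
    · exact Or.inl h
    · rcases le_total k l with hkl | hlk
      · exact Or.inr (Or.inr (cube_thread_subset hT hkl y))
      · exact Or.inr (Or.inl (cube_thread_subset hT hlk y))
  ball_subset k _ hz := ball_subset_cube hT hδ0 hδ hθ0 hθ hz
  subset_ball k z _ :=
    (cube_subset_ball hT k z).trans (ball_subset_ball (by linarith [zpow_pos hδ0 k]))
  union_descendants k m z _ := by
    ext x
    constructor
    · rintro rfl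
      exact mem_iUnion₂.2 ⟨N.thread θ x (k + m),
        ⟨(thread_mem hT x _).1, cube_thread_subset hT (by omega) x⟩, rfl⟩
    · intro hx
      obtain ⟨w, hw, hxw⟩ := mem_iUnion₂.1 hx
      exact hw.2 hxw

section Counting

variable {M : ℕ} (hGD : GeomDoubling X M) (hδ0 : 0 < δ) (hδ : δ ≤ 1 / 12) {Ω : Type*}
  {θ : Ω → ℝ} (hθ : ∀ ω, θ ω ≤ 1 / 2) (hspread : Pairwise fun ω ω' => 12 * δ ≤ |θ ω - θ ω'|)
include hGD hδ0 hδ hθ hspread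

/-- Each threshold `θ ω` for which `y` is unstable has a witness centre within `2 δ ^ k` of `y`,
and the spread of the thresholds makes the witnesses distinct. -/
lemma encard_not_stableAt_le (k : ℤ) (y : X) :
    {ω | ¬ N.StableAt (θ ω) k y}.encard ≤ M ^ 2 := by
  have hwit : ∀ ω ∈ {ω | ¬ N.StableAt (θ ω) k y}, ∃ z ∈ N.net k,
      |dist y z - infDist y (N.net k) - θ ω * δ ^ k| < 6 * δ ^ (k + 1) := fun ω hω => by
    simpa [StableAt] using hω
  have : Nonempty X := ⟨y⟩
  choose! z hz hzθ using hwit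
  have hΛ := zpow_pos hδ0 k
  rw [zpow_add_one₀ hδ0.ne'] at hzθ
  refine (encard_le_encard_of_injOn (f := z) (t := N.net k ∩ ball y (2 * δ ^ k)) (fun ω hω => ?_)
    fun ω hω ω' hω' hzz => ?_).trans (hGD.encard_inter_ball_le (N.separated k) y (by linarith))
  · refine ⟨hz ω hω, mem_ball'.2 ?_⟩
    have hθΛ : θ ω * δ ^ k ≤ δ ^ k / 2 := by nlinarith [hθ ω]
    have hδΛ : 6 * (δ ^ k * δ) ≤ δ ^ k / 2 := by nlinarith
    linarith [(abs_lt.1 (hzθ ω hω)).2, N.infDist_lt k y]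
  · by_contra hne
    have h1 := abs_lt.1 (hzθ ω hω)
    have h2 := abs_lt.1 (hzθ ω' hω')
    rw [hzz] at h1
    have hlt : |θ ω - θ ω'| * δ ^ k < 12 * δ * δ ^ k := by
      rw [← abs_of_pos hΛ, ← abs_mul, abs_of_pos hΛ, abs_lt]
      constructor <;> linarith
    nlinarith [hspread hne]

lemma exists_forall_stableAt [Fintype Ω] {ι : Type*} [Fintype ι] (y : ι → X) (l : ι → ℤ)
    (hcard : Fintype.card ι * M ^ 2 < Fintype.card Ω) :
    ∃ ω, ∀ j, N.StableAt (θ ω) (l j) (y j) := by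
  have hlt : (⋃ j, {ω | ¬ N.StableAt (θ ω) (l j) (y j)}).encard < (univ : Set Ω).encard :=
    calc _ ≤ ∑ j, {ω | ¬ N.StableAt (θ ω) (l j) (y j)}.encard := encard_iUnion_le_of_fintype _
      _ ≤ ∑ _j : ι, (M ^ 2 : ℕ∞) := Finset.sum_le_sum fun j _ =>
          N.encard_not_stableAt_le hGD hδ0 hδ hθ hspread (l j) (y j)
      _ < Fintype.card Ω := by simpa using (by exact_mod_cast hcard : _ < (Fintype.card Ω : ℕ∞))
      _ = _ := by simp
  by_contra! h
  exact (encard_le_encard fun ω _ => mem_iUnion.2 (h ω)).not_gt hlt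

end Counting

end LevelNets

lemma exists_zpow_le_and_lt {δ r : ℝ} (hδ0 : 0 < δ) (hδ1 : δ < 1) (hr : 0 < r) :
    ∃ k : ℤ, δ ^ k ≤ δ ^ (-2 : ℤ) * r ∧ r < δ ^ (k + 1) := by
  obtain ⟨m, hm1, hm2⟩ := exists_mem_Ico_zpow (mul_pos (zpow_pos hδ0 (-2)) hr)
    ((one_lt_inv₀ hδ0).2 hδ1)
  simp only [inv_zpow'] at hm1 hm2
  refine ⟨-m, hm1, ?_⟩
  have h := mul_lt_mul_of_pos_left hm2 (zpow_pos hδ0 2)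
  rwa [← mul_assoc, ← zpow_add₀ hδ0.ne', ← zpow_add₀ hδ0.ne', show (2 : ℤ) + -2 = 0 by norm_num,
    zpow_zero, one_mul, show (2 : ℤ) + -(m + 1) = -m + 1 by ring] at h

lemma exists_spread_thresholds {K : ℕ} {δ : ℝ} (hK : 24 * δ * K ≤ 1) :
    ∃ θ : Fin K → ℝ, (∀ ω, 0 < θ ω ∧ θ ω ≤ 1 / 2) ∧
      Pairwise fun ω ω' => 12 * δ ≤ |θ ω - θ ω'| := by
  refine ⟨fun ω => ((ω : ℕ) + 1 : ℝ) / (2 * K), fun ω => ?_, fun ω ω' hne => ?_⟩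
  · have hωK : ((ω : ℕ) + 1 : ℝ) ≤ K := by exact_mod_cast ω.isLt
    have hK0 : (0 : ℝ) < K := by exact_mod_cast ω.pos
    exact ⟨by positivity, by rw [div_le_iff₀ (by positivity)]; linarith⟩
  · have hK0 : (0 : ℝ) < K := by exact_mod_cast ω.pos
    have hgap : (1 : ℝ) ≤ |((ω : ℕ) : ℝ) - (ω' : ℕ)| := by
      rcases Nat.lt_or_gt_of_ne (Fin.val_ne_of_ne hne) with h | h
      · exact le_abs.2 (Or.inr (by linarith [(by exact_mod_cast h : ((ω : ℕ) : ℝ) + 1 ≤ ω')]))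
      · exact le_abs.2 (Or.inl (by linarith [(by exact_mod_cast h : ((ω' : ℕ) : ℝ) + 1 ≤ ω)]))
    dsimp only
    rw [← sub_div, add_sub_add_right_eq_sub, abs_div, abs_of_pos (by positivity : (0 : ℝ) < 2 * K),
      le_div_iff₀ (by positivity)]
    linarith

lemma bounds_of_lt_one_div {M n : ℕ} {δ : ℝ} (hδ0 : 0 < δ) (hδ : δ < 1 / (n * 168 * M ^ 8)) :
    δ ≤ 1 / 40 ∧ 24 * δ * ((2 * n * M ^ 2 + 1 : ℕ) : ℝ) ≤ 1 := by
  have hD : (0 : ℝ) < n * 168 * M ^ 8 := by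
    by_contra! h
    linarith [one_div_nonpos.2 h]
  have hn : (1 : ℝ) ≤ n := by
    rcases Nat.eq_zero_or_pos n with rfl | h
    · simp at hD
    · exact_mod_cast h
  have hM : (1 : ℝ) ≤ M := by
    rcases Nat.eq_zero_or_pos M with rfl | h
    · simp at hD
    · exact_mod_cast h
  have hδD : δ * (n * 168 * M ^ 8) < 1 := (lt_div_iff₀ hD).1 (by rwa [one_div] at hδ ⊢)
  have hM28 : (M : ℝ) ^ 2 ≤ M ^ 8 := pow_le_pow_right₀ hM (by norm_num)
  have hnM : 1 ≤ (n : ℝ) * M ^ 2 := one_le_mul_of_one_le_of_one_le hn (one_le_pow₀ hM)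
  have hK : ((2 * n * M ^ 2 + 1 : ℕ) : ℝ) ≤ 3 * (n * M ^ 8) := by push_cast; nlinarith
  have hnM8 : 1 ≤ (n : ℝ) * M ^ 8 := by nlinarith
  constructor <;> nlinarith [mul_le_mul_of_nonneg_left hK hδ0.le]

theorem stmt6_general (M n : ℕ) (δ : ℝ) (hδ0 : 0 < δ)
    (hδ : δ < 1 / (n * 168 * M ^ 8)) :
    ∃ K : ℕ, ∀ (X : Type) [MetricSpace X], GeomDoubling X M →
      ∃ DS : Fin K → DyadicSystem X δ,
        ∀ (p : ℕ) (x : Fin n → X) (r : Fin n → ℝ), (∀ i, 0 < r i) →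
          ∃ (ω : Fin K) (k : Fin n → ℤ) (c : Fin n → X),
            ∀ i : Fin n,
              c i ∈ (DS ω).idx (k i) ∧
              ball (x i) (r i) ⊆ (DS ω).cube (k i) (c i) ∧
              δ ^ (k i) ≤ δ ^ (-2 : ℤ) * r i ∧
              ∃ c' ∈ (DS ω).idx (k i - (p : ℤ)),
                (DS ω).cube (k i) (c i) ⊆ (DS ω).cube (k i - (p : ℤ)) c' ∧
                ball (x i) (δ ^ (-(p : ℤ)) * r i) ⊆ (DS ω).cube (k i - (p : ℤ)) c' := by
  obtain ⟨hδ40, hK⟩ := bounds_of_lt_one_div hδ0 hδ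
  obtain ⟨θ, hθ, hspread⟩ := exists_spread_thresholds hK
  refine ⟨2 * n * M ^ 2 + 1, fun X _ hGD => ?_⟩
  obtain ⟨N⟩ := LevelNets.nonempty X hδ0
  have hT : ∀ ω x, ∃ g, N.IsThread (θ ω) x g := fun ω =>
    N.exists_isThread hGD hδ0 (by linarith) (hθ ω).1 (hθ ω).2
  refine ⟨fun ω => N.toDyadicSystem hGD hδ0 hδ40 (hθ ω).1 (hθ ω).2 (hT ω), fun p x r hr => ?_⟩
  choose k hk hkr using fun i => exists_zpow_le_and_lt hδ0 (by linarith) (hr i)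
  obtain ⟨ω, hω⟩ := N.exists_forall_stableAt hGD hδ0 (by linarith) (fun ω => (hθ ω).2) hspread
    (fun j : Fin n × Bool => x j.1) (fun j => if j.2 then k j.1 else k j.1 - p)
    (by simp only [Fintype.card_prod, Fintype.card_fin, Fintype.card_bool]; lia)
  refine ⟨ω, k, fun i => N.thread (θ ω) (x i) (k i), fun i =>
    ⟨(LevelNets.thread_mem (hT ω) _ _).1,
      LevelNets.ball_subset_cube_of_stableAt (hT ω) hδ0 (by simpa using hω (i, true)) (hkr i).le,
      hk i, _, (LevelNets.thread_mem (hT ω) _ _).1,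
      LevelNets.cube_thread_subset (hT ω) (by omega) _,
      LevelNets.ball_subset_cube_of_stableAt (hT ω) hδ0 (by simpa using hω (i, false)) ?_⟩⟩
  rw [show k i - p + 1 = -p + (k i + 1) by ring, zpow_add₀ hδ0.ne']
  exact mul_le_mul_of_nonneg_left (hkr i).le (zpow_pos hδ0 _).le

/-- Adjacent dyadic systems: for a geometrically doubling space with constant `M`, `n ≥ 1` and
`δ < 1/(n·168·M⁸)`, there are `K` (depending only on `δ` and `M`) dyadic systems such that for
every `p ∈ ℕ` and all balls `B₁, …, B_n` there are `ω` and cubes `Q_{B_i} ∈ D(ω)` with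
(i) `B_i ⊆ Q_{B_i}`; (ii) `ℓ(Q_{B_i}) ≤ δ⁻²·r(B_i)`; (iii) `δ⁻ᵖ·B_i` is contained in the
ancestor of `Q_{B_i}` of `p` generations earlier. -/
theorem stmt6 (M n : ℕ) (hn : 1 ≤ n) (δ : ℝ) (hδ0 : 0 < δ)
    (hδ : δ < 1 / (n * 168 * M ^ 8)) :
    ∃ K : ℕ, ∀ (X : Type) [MetricSpace X], GeomDoubling X M →
      ∃ DS : Fin K → DyadicSystem X δ,
        ∀ (p : ℕ) (x : Fin n → X) (r : Fin n → ℝ), (∀ i, 0 < r i) →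
          ∃ (ω : Fin K) (k : Fin n → ℤ) (c : Fin n → X),
            ∀ i : Fin n,
              c i ∈ (DS ω).idx (k i) ∧
              ball (x i) (r i) ⊆ (DS ω).cube (k i) (c i) ∧
              δ ^ (k i) ≤ δ ^ (-2 : ℤ) * r i ∧
              ∃ c' ∈ (DS ω).idx (k i - (p : ℤ)),
                (DS ω).cube (k i) (c i) ⊆ (DS ω).cube (k i - (p : ℤ)) c' ∧
                ball (x i) (δ ^ (-(p : ℤ)) * r i) ⊆ (DS ω).cube (k i - (p : ℤ)) c' :=
  stmt6_general M n δ hδ0 hδ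
end

section
/- Let (X,d) be a geometrically doubling metric space with doubling constant M, let D be a dyadic system with parameter δ ∈ (0,1), let m ≥ 1, and let τ : D → D be an injective map such that τ maps cubes of level k to cubes of level k for every k ∈ ℤ and τ(Q) ⊆ m·B_Q for every Q ∈ D. Then there exists L ∈ ℕ, depending only on M and δ (and independent of m), such that D can be written as a disjoint union of L subcollections Q_1, …, Q_L with the following property: for every i, every k ∈ ℤ, and all distinct cubes Q₁, Q₂ ∈ Q_i of level k, one has 3δ^(−3)·B_{R₁} ∩ 3δ^(−3)·B_{R₂} = ∅ whenever R₁ ∈ {Q₁, τ(Q₁)}, R₂ ∈ {Q₂, τ(Q₂)} and R₁ ≠ R₂. -/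
open Metric

/-- A cube of a dyadic system: a level `k ∈ ℤ` together with a centre point of that level.
The first component is the level and the second component the centre. -/
def DyadicSystem.Cube {X : Type*} [MetricSpace X] {δ : ℝ} (D : DyadicSystem X δ) : Type _ :=
  { p : ℤ × X // p.2 ∈ D.idx p.1 }

/-- The level of a cube. -/
def DyadicSystem.lev {X : Type*} [MetricSpace X] {δ : ℝ} {D : DyadicSystem X δ}
    (Q : D.Cube) : ℤ := Q.val.1

/-- The centre of a cube. -/
def DyadicSystem.ctr {X : Type*} [MetricSpace X] {δ : ℝ} {D : DyadicSystem X δ}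
    (Q : D.Cube) : X := Q.val.2

/-- The underlying set of a cube. -/
def DyadicSystem.cubeOf {X : Type*} [MetricSpace X] {δ : ℝ} (D : DyadicSystem X δ)
    (Q : D.Cube) : Set X := D.cube Q.val.1 Q.val.2

lemma sep_finset_card {X : Type} [MetricSpace X] {M : ℕ}
    (hD : GeomDoubling X M) {ε : ℝ} (_hε : 0 < ε) :
    ∀ (n : ℕ) (x : X) (r : ℝ), r ≤ 2 ^ n * (ε / 2) →
      ∀ s : Finset X, (∀ a ∈ s, ∀ b ∈ s, a ≠ b → ε ≤ dist a b) →
        (∀ a ∈ s, a ∈ ball x r) → s.card ≤ M ^ n := by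
  intro n
  induction n with
  | zero =>
    intro x r hr s hsep hsub
    rw [pow_zero]
    apply Finset.card_le_one.mpr
    intro a ha b hb
    by_contra hab
    have h1 := hsep a ha b hb hab
    have ha' := mem_ball.mp (hsub a ha)
    have hb' := mem_ball.mp (hsub b hb)
    rw [pow_zero, one_mul] at hr
    have h2 : dist a b < ε := by
      calc dist a b ≤ dist a x + dist b x := dist_triangle_right _ _ _
        _ < r + r := by linarith
        _ ≤ ε := by linarith
    linarith
  | succ n ih =>
    intro x r hr s hsep hsub
    classical
    obtain ⟨t, htcard, htsub⟩ := hD x r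
    have hsub' : s ⊆ t.biUnion (fun y => s.filter (fun a => a ∈ ball y (r / 2))) := by
      intro a ha
      have h := htsub (hsub a ha)
      simp only [Set.mem_iUnion] at h
      obtain ⟨y, hy, hay⟩ := h
      exact Finset.mem_biUnion.mpr ⟨y, hy, Finset.mem_filter.mpr ⟨ha, hay⟩⟩
    have hr' : r / 2 ≤ 2 ^ n * (ε / 2) := by
      have h2 : (2:ℝ) ^ (n+1) * (ε/2) = 2 * (2 ^ n * (ε/2)) := by ring
      linarith
    calc s.card ≤ _ := Finset.card_le_card hsub'
      _ ≤ ∑ y ∈ t, (s.filter (fun a => a ∈ ball y (r/2))).card := Finset.card_biUnion_le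
      _ ≤ ∑ _y ∈ t, M ^ n := by
          apply Finset.sum_le_sum
          intro y _
          exact ih y (r/2) hr' _
            (fun a ha b hb hab => hsep a (Finset.mem_filter.mp ha).1 b (Finset.mem_filter.mp hb).1 hab)
            (fun a ha => (Finset.mem_filter.mp ha).2)
      _ = t.card * M ^ n := by rw [Finset.sum_const, smul_eq_mul]
      _ ≤ M * M ^ n := Nat.mul_le_mul_right _ htcard
      _ = M ^ (n+1) := by ring

lemma sep_set_card {X : Type} [MetricSpace X] {M : ℕ}
    (hD : GeomDoubling X M) {ε : ℝ} (hε : 0 < ε) (n : ℕ) (x : X) (r : ℝ)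
    (hr : r ≤ 2 ^ n * (ε / 2)) (s : Set X)
    (hsep : ∀ a ∈ s, ∀ b ∈ s, a ≠ b → ε ≤ dist a b) (hsub : s ⊆ ball x r) :
    s.Finite ∧ s.ncard ≤ M ^ n := by
  have hfin : s.Finite := by
    by_contra h
    have hinf : s.Infinite := h
    obtain ⟨u, hus, hucard⟩ := hinf.exists_subset_card_eq (M ^ n + 1)
    have := sep_finset_card hD hε n x r hr u
      (fun a ha b hb hab => hsep a (hus ha) b (hus hb) hab)
      (fun a ha => hsub (hus ha))
    omega
  refine ⟨hfin, ?_⟩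
  rw [Set.ncard_eq_toFinset_card s hfin]
  exact sep_finset_card hD hε n x r hr _
    (fun a ha b hb hab => hsep a (hfin.mem_toFinset.mp ha) b (hfin.mem_toFinset.mp hb) hab)
    (fun a ha => hsub (hfin.mem_toFinset.mp ha))

lemma greedy_coloring {V : Type} [Countable V] {L : ℕ} (hL : 0 < L)
    (G : V → V → Prop) (hsymm : ∀ v w, G v w → G w v) (hirr : ∀ v, ¬ G v v)
    (hfin : ∀ v, {w | G v w}.Finite)
    (hcard : ∀ v, (hfin v).toFinset.card < L) :
    ∃ c : V → Fin L, ∀ v w, G v w → c v ≠ c w := by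
  classical
  obtain ⟨f, hf⟩ := Countable.exists_injective_nat V
  have key : ∀ (n : ℕ) (ih : ∀ m, m < n → Fin L) (v : V),
      ∃ i : Fin L, ∀ w, G v w → ∀ hw : f w < n, ih (f w) hw ≠ i := by
    intro n ih v
    have hex : ∃ i : Fin L, i ∉ (hfin v).toFinset.image
        (fun w => if hw : f w < n then ih (f w) hw else ⟨0, hL⟩) := by
      by_contra hc
      push_neg at hc
      have h1 : (Finset.univ : Finset (Fin L)) ⊆ _ := fun i _ => hc i
      have h2 := Finset.card_le_card h1
      have h3 := Finset.card_image_le (s := (hfin v).toFinset)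
        (f := fun w => if hw : f w < n then ih (f w) hw else ⟨0, hL⟩)
      have h4 := hcard v
      rw [Finset.card_univ, Fintype.card_fin] at h2
      omega
    obtain ⟨i, hi⟩ := hex
    refine ⟨i, fun w hw hwn h => hi ?_⟩
    refine Finset.mem_image.mpr ⟨w, (hfin v).mem_toFinset.mpr hw, ?_⟩
    rw [dif_pos hwn, h]
  have hgex : ∃ g : ℕ → Fin L, ∀ (n : ℕ),
      g n = if h : ∃ v, f v = n then (key n (fun m _ => g m) h.choose).choose else ⟨0, hL⟩ := by
    refine ⟨WellFounded.fix (Nat.lt_wfRel.wf)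
      (fun n ih => if h : ∃ v, f v = n then (key n ih h.choose).choose else ⟨0, hL⟩),
      fun n => ?_⟩
    exact WellFounded.fix_eq _ _ n
  obtain ⟨g, hgeq⟩ := hgex
  have hg : ∀ (n : ℕ) (h : ∃ v, f v = n), ∀ w, G h.choose w → f w < n → g (f w) ≠ g n := by
    intro n h w hw hwn
    rw [hgeq n, dif_pos h]
    exact (key n (fun m _ => g m) h.choose).choose_spec w hw hwn
  refine ⟨fun v => g (f v), ?_⟩
  intro v w hG
  have hvw : v ≠ w := fun h => hirr v (h ▸ hG)
  rcases lt_trichotomy (f w) (f v) with hlt | heq | hlt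
  · have h : ∃ u, f u = f v := ⟨v, rfl⟩
    have hv : h.choose = v := hf h.choose_spec
    exact (hg (f v) h w (by rw [hv]; exact hG) hlt).symm
  · exact absurd (hf heq) (Ne.symm hvw)
  · have h : ∃ u, f u = f w := ⟨w, rfl⟩
    have hv : h.choose = w := hf h.choose_spec
    exact hg (f w) h v (by rw [hv]; exact hsymm v w hG) hlt


/-- Splitting a dyadic system into sparse subcollections: for every `M` and `δ ∈ (0,1)` there is
`L ∈ ℕ`, depending only on `M` and `δ` (in particular independent of `m`), such that for every
geometrically doubling space `X` with constant `M`, every dyadic system `D` with parameter `δ`,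
every `m ≥ 1` and every injective, level-preserving `τ : D → D` with `τ(Q) ⊆ m·B_Q`, the system
`D` splits into `L` subcollections (given by a colouring `c`) such that whenever `Q₁ ≠ Q₂` have
the same colour and the same level, and `R₁ ∈ {Q₁, τ(Q₁)}`, `R₂ ∈ {Q₂, τ(Q₂)}`, `R₁ ≠ R₂`, the
dilated balls `3δ⁻³·B_{R₁}` and `3δ⁻³·B_{R₂}` are disjoint. -/
theorem stmt9 (M : ℕ) (δ : ℝ) (hδ : δ ∈ Set.Ioo (0 : ℝ) 1) :
    ∃ L : ℕ, ∀ (X : Type) [MetricSpace X], GeomDoubling X M →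
      ∀ D : DyadicSystem X δ, ∀ m : ℝ, 1 ≤ m →
      ∀ τ : D.Cube → D.Cube, Function.Injective τ →
        (∀ Q : D.Cube, (τ Q).val.1 = Q.val.1) →
        (∀ Q : D.Cube, D.cubeOf (τ Q) ⊆ ball Q.val.2 (m * (3 * δ ^ Q.val.1))) →
      ∃ c : D.Cube → Fin L,
        ∀ Q₁ Q₂ : D.Cube, c Q₁ = c Q₂ → Q₁.val.1 = Q₂.val.1 → Q₁ ≠ Q₂ →
          ∀ R₁ R₂ : D.Cube, (R₁ = Q₁ ∨ R₁ = τ Q₁) → (R₂ = Q₂ ∨ R₂ = τ Q₂) → R₁ ≠ R₂ →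
            Disjoint (ball R₁.val.2 (3 * δ ^ (-3 : ℤ) * (3 * δ ^ R₁.val.1)))
              (ball R₂.val.2 (3 * δ ^ (-3 : ℤ) * (3 * δ ^ R₂.val.1))) := by
  obtain ⟨hδ0, hδ1⟩ := hδ
  obtain ⟨n, hn⟩ := pow_unbounded_of_one_lt (36 * δ ^ (-3 : ℤ)) (by norm_num : (1:ℝ) < 2)
  refine ⟨4 * M ^ n + 1, ?_⟩
  intro X _ hD D m hm τ hτinj hτlev hτsub
  haveI : Countable D.Cube := by
    have hc : Set.Countable {p : ℤ × X | p.2 ∈ D.idx p.1} := by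
      have he : {p : ℤ × X | p.2 ∈ D.idx p.1} = ⋃ k : ℤ, Prod.mk k '' D.idx k := by
        ext ⟨k, z⟩
        simp only [Set.mem_setOf_eq, Set.mem_iUnion, Set.mem_image, Prod.mk.injEq]
        constructor
        · exact fun h => ⟨k, z, h, rfl, rfl⟩
        · rintro ⟨j, w, hw, rfl, rfl⟩; exact hw
      rw [he]
      exact Set.countable_iUnion (fun k => (D.countable k).image _)
    exact hc.to_subtype
  set G : D.Cube → D.Cube → Prop := fun Q₁ Q₂ =>
    Q₁.val.1 = Q₂.val.1 ∧ Q₁ ≠ Q₂ ∧ ∃ R₁ R₂ : D.Cube,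
      (R₁ = Q₁ ∨ R₁ = τ Q₁) ∧ (R₂ = Q₂ ∨ R₂ = τ Q₂) ∧ R₁ ≠ R₂ ∧
      ¬ Disjoint (ball R₁.val.2 (3 * δ ^ (-3 : ℤ) * (3 * δ ^ R₁.val.1)))
        (ball R₂.val.2 (3 * δ ^ (-3 : ℤ) * (3 * δ ^ R₂.val.1))) with hGdef
  have hsymm : ∀ v w, G v w → G w v := by
    rintro v w ⟨h1, h2, R₁, R₂, hR1, hR2, hRne, hnd⟩
    exact ⟨h1.symm, h2.symm, R₂, R₁, hR2, hR1, hRne.symm, fun hd => hnd hd.symm⟩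
  have hirr : ∀ v, ¬ G v v := by rintro v ⟨-, h2, -⟩; exact h2 rfl
  have helper : ∀ (k : ℤ) (c₀ : X) (g : D.Cube → D.Cube), Function.Injective g →
      (∀ Q', (g Q').val.1 = Q'.val.1) →
      {Q' : D.Cube | Q'.val.1 = k ∧ (g Q').val.2 ∈ ball c₀ (18 * δ ^ (-3:ℤ) * δ ^ k)}.Finite ∧
      {Q' : D.Cube | Q'.val.1 = k ∧
        (g Q').val.2 ∈ ball c₀ (18 * δ ^ (-3:ℤ) * δ ^ k)}.ncard ≤ M ^ n := by
    intro k c₀ g hg hglev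
    set E := {Q' : D.Cube | Q'.val.1 = k ∧
      (g Q').val.2 ∈ ball c₀ (18 * δ ^ (-3:ℤ) * δ ^ k)} with hE
    have hδk : (0:ℝ) < δ ^ k := zpow_pos hδ0 k
    set φ : D.Cube → X := fun Q' => (g Q').val.2 with hφ
    have hinj : Set.InjOn φ E := by
      intro a ha b hb hab
      apply hg
      apply Subtype.ext
      apply Prod.ext
      · rw [hglev a, hglev b, ha.1, hb.1]
      · exact hab
    have hsep : ∀ p ∈ φ '' E, ∀ q ∈ φ '' E, p ≠ q → δ ^ k ≤ dist p q := by
      rintro p ⟨a, ha, rfl⟩ q ⟨b, hb, rfl⟩ hpq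
      have hpa : (g a).val.2 ∈ D.idx k := by
        have h := (g a).property
        rwa [hglev a, ha.1] at h
      have hpb : (g b).val.2 ∈ D.idx k := by
        have h := (g b).property
        rwa [hglev b, hb.1] at h
      exact D.separated k _ hpa _ hpb hpq
    have hsub : φ '' E ⊆ ball c₀ (18 * δ ^ (-3:ℤ) * δ ^ k) := by
      rintro p ⟨a, ha, rfl⟩; exact ha.2
    have hρ : 18 * δ ^ (-3:ℤ) * δ ^ k ≤ 2 ^ n * (δ ^ k / 2) := by
      have h1 : 18 * δ ^ (-3:ℤ) * δ ^ k = (36 * δ ^ (-3:ℤ)) * (δ ^ k / 2) := by ring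
      rw [h1]
      exact mul_le_mul_of_nonneg_right hn.le (by positivity)
    obtain ⟨hfin', hcard'⟩ := sep_set_card hD hδk n c₀ _ hρ (φ '' E) hsep hsub
    have hEfin : E.Finite := Set.Finite.of_finite_image hfin' hinj
    refine ⟨hEfin, ?_⟩
    rw [← Set.ncard_image_of_injOn hinj]
    exact hcard'
  have hdeg : ∀ Q : D.Cube, {Q' | G Q Q'}.Finite ∧ {Q' | G Q Q'}.ncard ≤ 4 * M ^ n := by
    intro Q
    obtain ⟨hA, hAc⟩ := helper Q.val.1 Q.val.2 id Function.injective_id (fun _ => rfl)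
    obtain ⟨hB, hBc⟩ := helper Q.val.1 (τ Q).val.2 id Function.injective_id (fun _ => rfl)
    obtain ⟨hC, hCc⟩ := helper Q.val.1 Q.val.2 τ hτinj hτlev
    obtain ⟨hE, hEc⟩ := helper Q.val.1 (τ Q).val.2 τ hτinj hτlev
    have hsubset : {Q' | G Q Q'} ⊆
        (({Q' : D.Cube | Q'.val.1 = Q.val.1 ∧
            (id Q').val.2 ∈ ball Q.val.2 (18 * δ ^ (-3:ℤ) * δ ^ Q.val.1)} ∪
          {Q' : D.Cube | Q'.val.1 = Q.val.1 ∧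
            (id Q').val.2 ∈ ball (τ Q).val.2 (18 * δ ^ (-3:ℤ) * δ ^ Q.val.1)}) ∪
         ({Q' : D.Cube | Q'.val.1 = Q.val.1 ∧
            (τ Q').val.2 ∈ ball Q.val.2 (18 * δ ^ (-3:ℤ) * δ ^ Q.val.1)} ∪
          {Q' : D.Cube | Q'.val.1 = Q.val.1 ∧
            (τ Q').val.2 ∈ ball (τ Q).val.2 (18 * δ ^ (-3:ℤ) * δ ^ Q.val.1)})) := by
      rintro Q' ⟨hlev, hne, R₁, R₂, hR1, hR2, hRne, hnd⟩
      obtain ⟨z, hz1, hz2⟩ := Set.not_disjoint_iff.mp hnd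
      have hl1 : R₁.val.1 = Q.val.1 := by rcases hR1 with rfl | rfl; exacts [rfl, hτlev Q]
      have hl2 : R₂.val.1 = Q.val.1 := by
        rcases hR2 with rfl | rfl
        · exact hlev.symm
        · rw [hτlev Q']; exact hlev.symm
      have hd : dist R₂.val.2 R₁.val.2 < 18 * δ ^ (-3:ℤ) * δ ^ Q.val.1 := by
        have h1 := mem_ball.mp hz1
        have h2 := mem_ball.mp hz2
        rw [hl1] at h1
        rw [hl2] at h2
        have h3 := dist_triangle R₂.val.2 z R₁.val.2
        rw [dist_comm R₂.val.2 z] at h3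
        have h4 : 18 * δ ^ (-3:ℤ) * δ ^ Q.val.1 =
            (3 * δ ^ (-3:ℤ) * (3 * δ ^ Q.val.1)) + (3 * δ ^ (-3:ℤ) * (3 * δ ^ Q.val.1)) := by
          ring
        linarith
      rcases hR2 with rfl | rfl
      · rcases hR1 with rfl | rfl
        · exact Or.inl (Or.inl ⟨hlev.symm, mem_ball.mpr hd⟩)
        · exact Or.inl (Or.inr ⟨hlev.symm, mem_ball.mpr hd⟩)
      · rcases hR1 with rfl | rfl
        · exact Or.inr (Or.inl ⟨hlev.symm, mem_ball.mpr hd⟩)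
        · exact Or.inr (Or.inr ⟨hlev.symm, mem_ball.mpr hd⟩)
    have hfinU := ((hA.union hB).union (hC.union hE))
    refine ⟨Set.Finite.subset hfinU hsubset, ?_⟩
    have b1 := Set.ncard_le_ncard hsubset hfinU
    have b2 := Set.ncard_union_le
      ({Q' : D.Cube | Q'.val.1 = Q.val.1 ∧
          (id Q').val.2 ∈ ball Q.val.2 (18 * δ ^ (-3:ℤ) * δ ^ Q.val.1)} ∪
        {Q' : D.Cube | Q'.val.1 = Q.val.1 ∧
          (id Q').val.2 ∈ ball (τ Q).val.2 (18 * δ ^ (-3:ℤ) * δ ^ Q.val.1)})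
      ({Q' : D.Cube | Q'.val.1 = Q.val.1 ∧
          (τ Q').val.2 ∈ ball Q.val.2 (18 * δ ^ (-3:ℤ) * δ ^ Q.val.1)} ∪
        {Q' : D.Cube | Q'.val.1 = Q.val.1 ∧
          (τ Q').val.2 ∈ ball (τ Q).val.2 (18 * δ ^ (-3:ℤ) * δ ^ Q.val.1)})
    have b3 := Set.ncard_union_le
      {Q' : D.Cube | Q'.val.1 = Q.val.1 ∧
          (id Q').val.2 ∈ ball Q.val.2 (18 * δ ^ (-3:ℤ) * δ ^ Q.val.1)}
      {Q' : D.Cube | Q'.val.1 = Q.val.1 ∧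
          (id Q').val.2 ∈ ball (τ Q).val.2 (18 * δ ^ (-3:ℤ) * δ ^ Q.val.1)}
    have b4 := Set.ncard_union_le
      {Q' : D.Cube | Q'.val.1 = Q.val.1 ∧
          (τ Q').val.2 ∈ ball Q.val.2 (18 * δ ^ (-3:ℤ) * δ ^ Q.val.1)}
      {Q' : D.Cube | Q'.val.1 = Q.val.1 ∧
          (τ Q').val.2 ∈ ball (τ Q).val.2 (18 * δ ^ (-3:ℤ) * δ ^ Q.val.1)}
    omega
  obtain ⟨c, hc⟩ := greedy_coloring (L := 4 * M ^ n + 1) (Nat.succ_pos _) G hsymm hirr (fun v => (hdeg v).1)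
    (fun v => by
      have h := (hdeg v).2
      have e : {Q' | G v Q'}.ncard = ((hdeg v).1).toFinset.card :=
        Set.ncard_eq_toFinset_card _ ((hdeg v).1)
      omega)
  refine ⟨c, fun Q₁ Q₂ hcol hlev hne R₁ R₂ hR1 hR2 hRne => ?_⟩
  by_contra hnd
  exact hc Q₁ Q₂ ⟨hlev, hne, R₁, R₂, hR1, hR2, hRne, hnd⟩ hcol
end
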